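/- For 0 ≤ k ≤ n, r ≥ 0, and any ring element t, G_{a,b}(n,k;r) = Σ_{j=k}^{n} G_{a,t}(n,j;r) · G_{−t,b}(j,k;r). -/

import Mathlib

open Finset

/-- The generalized r-Lah numbers `G_{a,b}(n,k;r)`. -/
def genLah {R : Type*} [CommRing R] (a b : R) (r : ℕ) : ℕ → ℕ → R
  | 0, 0 => 1
  | 0, _ + 1 => 0
  | n + 1, 0 => (a * ((n : R) + (r : R)) + b * (r : R)) * genLah a b r n 0
  | n + 1, k + 1 => genLah a b r n k +
      (a * (n : R) + b * ((k : R) + 1) + (a + b) * (r : R)) * genLah a b r n (k + 1)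

open Polynomial

/-! With `(x | c)_n := ∏_{i<n} (x + c (i + r))` in `R[X]`, the recurrence for `G_{a,b}` is exactly
`(x | a)_n = ∑_k G_{a,b}(n,k;r) (x | -b)_k`, because
`(x | -b)_k (x + a (n + r)) = (x | -b)_{k+1} + (a n + b k + (a + b) r) (x | -b)_k`.
So `G_{a,b}` is the matrix of a change of basis in `R[X]`; passing from `(x | a)` to `(x | -b)`
through `(x | -t)` composes two such matrices, and since the `(x | -b)_k` are monic of degree `k`,
coefficients in them are unique. -/

theorem Polynomial.eq_of_sum_range_smul_eq_of_monic {R : Type*} [Ring R] {p : ℕ → R[X]}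
    (hmonic : ∀ k, (p k).Monic) (hdeg : ∀ k, (p k).natDegree = k) {c d : ℕ → R} {n : ℕ}
    (h : ∑ k ∈ range n, c k • p k = ∑ k ∈ range n, d k • p k) : ∀ k < n, c k = d k := by
  induction n with
  | zero => simp
  | succ n ih =>
    have hcoeff (e : ℕ → R) : (∑ k ∈ range (n + 1), e k • p k).coeff n = e n := by
      have hlead : (p n).coeff n = 1 := by simpa [hdeg n] using (hmonic n).coeff_natDegree
      rw [finsetSum_coeff, sum_range_succ, coeff_smul, hlead, smul_eq_mul, mul_one,
        add_eq_right]
      refine sum_eq_zero fun k hk => ?_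
      rw [coeff_smul, coeff_eq_zero_of_natDegree_lt (by rw [hdeg]; exact mem_range.1 hk),
        smul_zero]
    have hn : c n = d n := by rw [← hcoeff c, h, hcoeff d]
    rw [sum_range_succ, sum_range_succ, hn, add_left_inj] at h
    intro k hk
    rcases Nat.lt_succ_iff_lt_or_eq.1 hk with hk | rfl
    exacts [ih h k hk, hn]

section

variable {R : Type*} [CommRing R]

theorem genLah_eq_zero_of_lt (a b : R) (r : ℕ) {n k : ℕ} (h : n < k) : genLah a b r n k = 0 := by
  induction n generalizing k with
  | zero => obtain ⟨k, rfl⟩ := Nat.exists_eq_add_of_lt h; rfl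
  | succ n ih =>
    obtain ⟨k, rfl⟩ := Nat.exists_eq_add_of_le' (Nat.zero_lt_of_lt h)
    rw [genLah, ih (by omega), ih (by omega), mul_zero, add_zero]

-- The weight at `k = 0` is written in the form the sums below produce.
theorem genLah_succ_zero (a b : R) (r n : ℕ) :
    genLah a b r (n + 1) 0 = (a * n + b * (0 : ℕ) + (a + b) * r) * genLah a b r n 0 := by
  rw [genLah]; push_cast; ring

theorem genLah_succ_succ (a b : R) (r n k : ℕ) :
    genLah a b r (n + 1) (k + 1) =
      genLah a b r n k + (a * n + b * (k + 1 : ℕ) + (a + b) * r) * genLah a b r n (k + 1) := by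
  rw [genLah]; push_cast; ring

theorem sum_range_genLah_succ_smul {M : Type*} [AddCommGroup M] [Module R M] (a b : R)
    (r n : ℕ) (f : ℕ → M) :
    ∑ k ∈ range (n + 2), genLah a b r (n + 1) k • f k =
      ∑ k ∈ range (n + 1), genLah a b r n k • f (k + 1) +
        ∑ k ∈ range (n + 1), ((a * n + b * k + (a + b) * r) * genLah a b r n k) • f k := by
  have htop : ∑ k ∈ range (n + 1), ((a * n + b * k + (a + b) * r) * genLah a b r n k) • f k =
      ∑ k ∈ range (n + 2), ((a * n + b * k + (a + b) * r) * genLah a b r n k) • f k := by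
    rw [sum_range_succ _ (n + 1), genLah_eq_zero_of_lt a b r (Nat.lt_succ_self n), mul_zero,
      zero_smul, add_zero]
  rw [htop, sum_range_succ' _ (n + 1), sum_range_succ' _ (n + 1), ← add_assoc,
    ← sum_add_distrib, genLah_succ_zero]
  congr 1
  refine sum_congr rfl fun k _ => ?_
  rw [genLah_succ_succ, add_smul]

noncomputable def genRisingFactorial (c : R) (r n : ℕ) : R[X] :=
  ∏ i ∈ range n, (X + C (c * (i + r)))

theorem genRisingFactorial_succ (c : R) (r n : ℕ) :
    genRisingFactorial c r (n + 1) = genRisingFactorial c r n * (X + C (c * (n + r))) :=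
  prod_range_succ _ _

theorem monic_genRisingFactorial (c : R) (r n : ℕ) : (genRisingFactorial c r n).Monic :=
  monic_prod_of_monic _ _ fun _ _ => monic_X_add_C _

theorem natDegree_genRisingFactorial [Nontrivial R] (c : R) (r n : ℕ) :
    (genRisingFactorial c r n).natDegree = n := by
  rw [genRisingFactorial, natDegree_prod_of_monic _ _ fun _ _ => monic_X_add_C _]
  simp only [natDegree_X_add_C, sum_const, card_range, smul_eq_mul, mul_one]

theorem genRisingFactorial_mul_X_add_C (a b : R) (r n k : ℕ) :
    genRisingFactorial (-b) r k * (X + C (a * (n + r))) =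
      genRisingFactorial (-b) r (k + 1) +
        (a * n + b * k + (a + b) * r) • genRisingFactorial (-b) r k := by
  rw [genRisingFactorial_succ, smul_eq_C_mul]
  simp only [map_add, map_mul, map_neg, map_natCast]
  ring

theorem genRisingFactorial_eq_sum_genLah (a b : R) (r n : ℕ) :
    genRisingFactorial a r n =
      ∑ k ∈ range (n + 1), genLah a b r n k • genRisingFactorial (-b) r k := by
  induction n with
  | zero => simp [genRisingFactorial, genLah]
  | succ n ih =>
    rw [genRisingFactorial_succ, ih, sum_mul, sum_range_genLah_succ_smul, ← sum_add_distrib]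
    refine sum_congr rfl fun k _ => ?_
    rw [smul_mul_assoc, genRisingFactorial_mul_X_add_C, smul_add, smul_smul, mul_comm]

theorem genRisingFactorial_eq_sum_genLah_of_lt (a b : R) (r : ℕ) {n N : ℕ} (hn : n < N) :
    genRisingFactorial a r n =
      ∑ k ∈ range N, genLah a b r n k • genRisingFactorial (-b) r k :=
  (genRisingFactorial_eq_sum_genLah a b r n).trans <|
    sum_subset (range_subset_range.2 hn) fun _ _ hk => by
      rw [genLah_eq_zero_of_lt a b r (not_lt.1 (mt mem_range.2 hk)), zero_smul]

theorem genLah_eq_sum_range_mul (a b t : R) (r : ℕ) {n k : ℕ} (hk : k ≤ n) :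
    genLah a b r n k = ∑ j ∈ range (n + 1), genLah a t r n j * genLah (-t) b r j k := by
  nontriviality R
  have hcomp : genRisingFactorial a r n = ∑ k ∈ range (n + 1),
      (∑ j ∈ range (n + 1), genLah a t r n j * genLah (-t) b r j k) •
        genRisingFactorial (-b) r k :=
    calc genRisingFactorial a r n
        = ∑ j ∈ range (n + 1), genLah a t r n j • genRisingFactorial (-t) r j :=
          genRisingFactorial_eq_sum_genLah a t r n
      _ = ∑ j ∈ range (n + 1), genLah a t r n j •
            ∑ k ∈ range (n + 1), genLah (-t) b r j k • genRisingFactorial (-b) r k :=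
          sum_congr rfl fun j hj => by
            rw [genRisingFactorial_eq_sum_genLah_of_lt (-t) b r (mem_range.1 hj)]
      _ = _ := by simp only [smul_sum, smul_smul, sum_smul]; exact sum_comm
  exact eq_of_sum_range_smul_eq_of_monic (monic_genRisingFactorial (-b) r)
    (natDegree_genRisingFactorial (-b) r)
    ((genRisingFactorial_eq_sum_genLah a b r n).symm.trans hcomp) k (Nat.lt_succ_of_le hk)

end

theorem genLah_param_convolution {R : Type*} [CommRing R] (a b t : R) (r n k : ℕ)
    (hkn : k ≤ n) :
    genLah a b r n k = ∑ j ∈ Icc k n, genLah a t r n j * genLah (-t) b r j k := by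
  rw [genLah_eq_sum_range_mul a b t r hkn]
  refine (sum_subset (fun j hj => ?_) fun j _ hj => ?_).symm
  · exact mem_range.2 (Nat.lt_succ_of_le (mem_Icc.1 hj).2)
  · have hjk : j < k := by simp_all
    rw [genLah_eq_zero_of_lt (-t) b r hjk, mul_zero]
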